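/- With the hypotheses above, suppose additionally that there is a sequence $(n_k, j_k)$ and real numbers $\sigma_{n_k} \in \sigma(T_{n_k})$ with $\sigma_{n_k} \to \delta$ and $\sigma_{n_k} \ne \delta$ infinitely often, with $n_k \to \infty$. Then $T - \delta$ is not invertible modulo the closed ideal $\overline{\bigoplus_n B(\mathcal{H}_n)}$; equivalently, $\delta$ lies in the spectrum of the image of $T$ in the Calkin-type quotient $B(\bigoplus \mathcal{H}_n)/\overline{\bigoplus B(\mathcal{H}_n)}$. -/

import Mathlib

/-!
Suppose `S'` inverted `T - δ` modulo the closure of the finitely supported operators. The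
diagonal blocks `P N * x * P N` of anything in that closure tend to zero, and `σ k → δ`, so for
large `k` the compression `P (n k) * S' * P (n k)` is an approximate inverse of `T - σ k` on the
block `n k`, with error less than one on both sides. Extending by the identity off that block
and using a Neumann series turns it into an exact inverse on the block, contradicting
`σ k ∈ σ(T_{n k})`.
-/

open Filter Topology

theorem isUnit_of_isUnit_mul_of_isUnit_mul {M : Type*} [Monoid M] {a b : M}
    (hab : IsUnit (a * b)) (hba : IsUnit (b * a)) : IsUnit a := by
  obtain ⟨c, hc⟩ := hab.exists_right_inv
  obtain ⟨d, hd⟩ := hba.exists_left_inv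
  have hr : a * (b * c) = 1 := by rw [← mul_assoc, hc]
  have hl : d * b * a = 1 := by rw [mul_assoc, hd]
  exact isUnit_iff_exists.2 ⟨b * c, hr, by rwa [← left_inv_eq_right_inv hl hr]⟩

theorem isUnit_of_norm_mul_sub_one_lt_one {R : Type*} [NormedRing R] [CompleteSpace R]
    {a b : R} (hab : ‖a * b - 1‖ < 1) (hba : ‖b * a - 1‖ < 1) : IsUnit a := by
  have near_one {x : R} (hx : ‖x - 1‖ < 1) : IsUnit x := by
    rw [← norm_neg, neg_sub] at hx
    simpa using (Units.oneSub (1 - x) hx).isUnit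
  exact isUnit_of_isUnit_mul_of_isUnit_mul (near_one hab) (near_one hba)

namespace IsIdempotentElem

variable {R : Type*}

theorem exists_corner_inverse_of_isUnit [Ring R] {q d : R} (hq : IsIdempotentElem q)
    (hdq : Commute d q) (hu : IsUnit (d * q + (1 - q))) :
    ∃ t, t = q * t * q ∧ d * t = q ∧ t * d = q := by
  obtain ⟨u, hu⟩ := hu
  have huq : u * q = d * q := by
    rw [hu, add_mul, sub_mul, one_mul, mul_assoc, hq.eq, sub_self, add_zero]
  have hqu : Commute q ↑u⁻¹ := by
    refine Commute.units_inv_right ?_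
    rw [Commute, SemiconjBy, huq, hu, mul_add, mul_sub, mul_one, ← mul_assoc, ← hdq.eq,
      mul_assoc, hq.eq, sub_self, add_zero]
  refine ⟨↑u⁻¹ * q, ?_, ?_, ?_⟩
  · rw [← mul_assoc, hqu.eq, mul_assoc, mul_assoc, hq.eq, hq.eq]
  · rw [← hqu.eq, ← mul_assoc, ← huq, mul_assoc, hqu.eq, ← mul_assoc, u.mul_inv, one_mul]
  · rw [mul_assoc, ← hdq.eq, ← huq, ← mul_assoc, u.inv_mul, one_mul]

theorem add_one_sub_mul_add_one_sub_sub_one [Ring R] {q d s : R} (hq : IsIdempotentElem q)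
    (hdq : Commute d q) : (d * q + (1 - q)) * (q * s * q + (1 - q)) - 1 = q * (d * s - 1) * q := by
  have hqq (x : R) : q * (q * x) = q * x := by rw [← mul_assoc, hq.eq]
  have hdq' (x : R) : d * (q * x) = q * (d * x) := by rw [← mul_assoc, hdq.eq, mul_assoc]
  simp only [mul_add, add_mul, mul_sub, sub_mul, mul_one, one_mul, mul_assoc, hq.eq, hdq.eq, hqq,
    hdq']
  abel

theorem add_one_sub_mul_add_one_sub_sub_one' [Ring R] {q d s : R} (hq : IsIdempotentElem q)
    (hdq : Commute d q) : (q * s * q + (1 - q)) * (d * q + (1 - q)) - 1 = q * (s * d - 1) * q := by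
  have hqq (x : R) : q * (q * x) = q * x := by rw [← mul_assoc, hq.eq]
  simp only [mul_add, add_mul, mul_sub, sub_mul, mul_one, one_mul, mul_assoc, hq.eq, hdq.eq, hqq]
  abel

theorem exists_corner_inverse_of_norm_lt_one [NormedRing R] [CompleteSpace R] {q d s : R}
    (hq : IsIdempotentElem q) (hdq : Commute d q) (h₁ : ‖q * (d * s - 1) * q‖ < 1)
    (h₂ : ‖q * (s * d - 1) * q‖ < 1) : ∃ t, t = q * t * q ∧ d * t = q ∧ t * d = q :=
  hq.exists_corner_inverse_of_isUnit hdq <| isUnit_of_norm_mul_sub_one_lt_one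
    (b := q * s * q + (1 - q)) (by rwa [hq.add_one_sub_mul_add_one_sub_sub_one hdq])
    (by rwa [hq.add_one_sub_mul_add_one_sub_sub_one' hdq])

end IsIdempotentElem

section BlockCompression

variable {R : Type*} [NormedRing R]

theorem norm_mul_mul_le_of_norm_le_one {q : R} (hq : ‖q‖ ≤ 1) (x : R) : ‖q * x * q‖ ≤ ‖x‖ :=
  calc ‖q * x * q‖ ≤ ‖q‖ * ‖x‖ * ‖q‖ := norm_mul₃_le
    _ ≤ 1 * ‖x‖ * 1 := by gcongr
    _ = ‖x‖ := by ring

/-- The algebraic direct sum `⊕ₙ B(Hₙ)` of the paper, for `Hₙ` the range of `P n`. -/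
def blockFinite (P : ℕ → R) : Set R :=
  {A | ∃ F : Finset ℕ, A = (∑ m ∈ F, P m) * A * (∑ m ∈ F, P m)}

theorem mul_mul_eq_zero_of_notMem {P : ℕ → R} (horth : ∀ m n, m ≠ n → P m * P n = 0)
    {F : Finset ℕ} {A : R} (hA : A = (∑ m ∈ F, P m) * A * (∑ m ∈ F, P m)) {N : ℕ}
    (hN : N ∉ F) : P N * A * P N = 0 := by
  have hleft : P N * ∑ m ∈ F, P m = 0 := by
    rw [Finset.mul_sum]
    exact Finset.sum_eq_zero fun m hm => horth N m (ne_of_mem_of_not_mem hm hN).symm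
  rw [hA]
  simp only [← mul_assoc, hleft, zero_mul]

theorem tendsto_mul_mul_of_mem_closure_blockFinite {P : ℕ → R} (hP : ∀ n, ‖P n‖ ≤ 1)
    (horth : ∀ m n, m ≠ n → P m * P n = 0) {Z : R} (hZ : Z ∈ closure (blockFinite P)) :
    Tendsto (fun N => P N * Z * P N) atTop (𝓝 0) := by
  refine Metric.tendsto_nhds.2 fun ε hε => ?_
  obtain ⟨A, ⟨F, hA⟩, hZA⟩ := Metric.mem_closure_iff.1 hZ ε hε
  filter_upwards [Nat.cofinite_eq_atTop ▸ F.eventually_cofinite_notMem] with N hN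
  rw [dist_zero_right, ← sub_zero (P N * Z * P N), ← mul_mul_eq_zero_of_notMem horth hA hN,
    ← sub_mul, ← mul_sub]
  exact (norm_mul_mul_le_of_norm_le_one (hP N) _).trans_lt (dist_eq_norm Z A ▸ hZA)

theorem tendsto_mul_add_smul_mul {𝕜 : Type*} [NormedField 𝕜] [NormedAlgebra 𝕜 R] {ι : Type*}
    {l : Filter ι} {Q : ι → R} (hQ : ∀ i, ‖Q i‖ ≤ 1) {x s : R} {c : ι → 𝕜}
    (hc : Tendsto c l (𝓝 0)) (hx : Tendsto (fun i => Q i * x * Q i) l (𝓝 0)) :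
    Tendsto (fun i => Q i * (x + c i • s) * Q i) l (𝓝 0) := by
  have hbdd : IsBoundedUnder (· ≤ ·) l (norm ∘ fun i => Q i * s * Q i) :=
    isBoundedUnder_of ⟨‖s‖, fun i => norm_mul_mul_le_of_norm_le_one (hQ i) s⟩
  simpa [mul_add, add_mul, mul_smul_comm, smul_mul_assoc] using
    hx.add (hc.zero_smul_isBoundedUnder_le hbdd)

end BlockCompression

theorem stmt11_general {H : Type*} [NormedAddCommGroup H] [InnerProductSpace ℂ H]
    [CompleteSpace H]
    (P : ℕ → H →L[ℂ] H)
    (hproj : ∀ n, IsIdempotentElem (P n) ∧ IsSelfAdjoint (P n))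
    (horth : ∀ m n, m ≠ n → P m * P n = 0)
    (T : H →L[ℂ] H)
    (hTblock : ∀ n, T * P n = P n * T)
    (δ : ℝ)
    (n : ℕ → ℕ) (hn : StrictMono n)
    (σ : ℕ → ℝ)
    (hσspec : ∀ k, ¬ ∃ S : H →L[ℂ] H,
      S = P (n k) * S * P (n k) ∧
        (T - (σ k : ℂ) • 1) * S = P (n k) ∧ S * (T - (σ k : ℂ) • 1) = P (n k))
    (hσlim : Filter.Tendsto σ Filter.atTop (nhds δ)) :
    ¬ ∃ S' : H →L[ℂ] H,
      ((T - (δ : ℂ) • 1) * S' - 1) ∈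
          closure {A : H →L[ℂ] H | ∃ F : Finset ℕ,
            A = (∑ m ∈ F, P m) * A * (∑ m ∈ F, P m)} ∧
        (S' * (T - (δ : ℂ) • 1) - 1) ∈
          closure {A : H →L[ℂ] H | ∃ F : Finset ℕ,
            A = (∑ m ∈ F, P m) * A * (∑ m ∈ F, P m)} := by
  rintro ⟨S', hR, hL⟩
  have hP (m : ℕ) : ‖P m‖ ≤ 1 := IsStarProjection.norm_le _ ⟨(hproj m).1, (hproj m).2⟩
  have hc : Tendsto (fun k => (δ : ℂ) - σ k) atTop (𝓝 0) := by
    simpa using ((Complex.continuous_ofReal.tendsto δ).comp hσlim).const_sub (δ : ℂ)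
  have hsmall {x : H →L[ℂ] H} (hx : x ∈ closure (blockFinite P)) :
      ∀ᶠ k in atTop, ‖P (n k) * (x + ((δ : ℂ) - σ k) • S') * P (n k)‖ < 1 := by
    have := tendsto_mul_add_smul_mul (s := S') (fun k => hP (n k)) hc
      ((tendsto_mul_mul_of_mem_closure_blockFinite hP horth hx).comp hn.tendsto_atTop)
    exact this.norm.eventually (gt_mem_nhds (by simp))
  obtain ⟨k, hkR, hkL⟩ := ((hsmall hR).and (hsmall hL)).exists
  have hcomm : Commute (T - (σ k : ℂ) • 1) (P (n k)) :=
    Commute.sub_left (hTblock (n k)) ((Commute.one_left _).smul_left _)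
  have eR : (T - (σ k : ℂ) • 1) * S' - 1 = (T - (δ : ℂ) • 1) * S' - 1 + ((δ : ℂ) - σ k) • S' := by
    simp only [sub_mul, sub_smul, smul_mul_assoc, one_mul]
    abel
  have eL : S' * (T - (σ k : ℂ) • 1) - 1 = S' * (T - (δ : ℂ) • 1) - 1 + ((δ : ℂ) - σ k) • S' := by
    simp only [mul_sub, sub_smul, mul_smul_comm, mul_one]
    abel
  exact hσspec k <| (hproj (n k)).1.exists_corner_inverse_of_norm_lt_one hcomm
    (by rwa [eR]) (by rwa [eL])

/-- with the block-diagonal setup of Statement 10 (projections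
`P n`, self-adjoint block-diagonal `T`), suppose there are indices `n k → ∞`
and reals `σ k` in the spectrum of the block `T_{n k}` (i.e. `T - σ k` is not
invertible on the range of `P (n k)`), with `σ k → δ` and `σ k ≠ δ` infinitely
often. Then `T - δ` is not invertible modulo the norm closure of the ideal of
operators supported on finitely many blocks; equivalently `δ` is in the
spectrum of the image of `T` in the Calkin-type quotient. -/
theorem stmt11 {H : Type*} [NormedAddCommGroup H] [InnerProductSpace ℂ H]
    [CompleteSpace H]
    (P : ℕ → H →L[ℂ] H)
    (hproj : ∀ n, IsIdempotentElem (P n) ∧ IsSelfAdjoint (P n))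
    (horth : ∀ m n, m ≠ n → P m * P n = 0)
    (hsum : ∀ x : H, HasSum (fun n => P n x) x)
    (T : H →L[ℂ] H) (hTsa : IsSelfAdjoint T)
    (hTblock : ∀ n, T * P n = P n * T)
    (δ : ℝ)
    (n : ℕ → ℕ) (hn : StrictMono n)
    (σ : ℕ → ℝ)
    (hσspec : ∀ k, ¬ ∃ S : H →L[ℂ] H,
      S = P (n k) * S * P (n k) ∧
        (T - (σ k : ℂ) • 1) * S = P (n k) ∧ S * (T - (σ k : ℂ) • 1) = P (n k))
    (hσlim : Filter.Tendsto σ Filter.atTop (nhds δ))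
    (hσne : ∀ K : ℕ, ∃ k ≥ K, σ k ≠ δ) :
    ¬ ∃ S' : H →L[ℂ] H,
      ((T - (δ : ℂ) • 1) * S' - 1) ∈
          closure {A : H →L[ℂ] H | ∃ F : Finset ℕ,
            A = (∑ m ∈ F, P m) * A * (∑ m ∈ F, P m)} ∧
        (S' * (T - (δ : ℂ) • 1) - 1) ∈
          closure {A : H →L[ℂ] H | ∃ F : Finset ℕ,
            A = (∑ m ∈ F, P m) * A * (∑ m ∈ F, P m)} :=
  stmt11_general P hproj horth T hTblock δ n hn σ hσspec hσlim
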